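/- The infinite-data CFQE iterates are valid lower bounds on the true Q-function with quantified worst-case error: for every h ∈ {1,…,H} and all (s,a), 0 ≤ Q_h(s,a) − f̂_h(s,a) ≤ (H−h) − Σ_{i=1}^{H−h} (α_min/β_max)^i. In particular, if α(s,a) = 1/(1+ε) and β(s,a) = 1+ε for some ε > 0, then for every state s: 0 ≤ V_1(s) − Σ_a π_e(a|s) f̂_1(s,a) ≤ 2εH². -/

import Mathlib

open Finset

noncomputable section

variable {S U A : Type*}

/-- Marginalized (observed) behavior policy `π_b(a|s) = Σ_u P(u|s) π_b(a|s,u)`. -/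
def piMarg [Fintype U] (Pu : S → U → ℝ) (pib : S → U → A → ℝ) (s : S) (a : A) : ℝ :=
  ∑ u, Pu s u * pib s u a

/-- Marginalized transition kernel `P(s'|s,a) = Σ_u P(u|s) T(s'|s,u,a)`. -/
def margKer [Fintype U] (Pu : S → U → ℝ) (T : S → U → A → S → ℝ)
    (s : S) (a : A) (s' : S) : ℝ :=
  ∑ u, Pu s u * T s u a s'

/-- Confounded observed kernel `P^b(s'|s,a) = Σ_u P(u|s)·(π_b(a|s,u)/π_b(a|s))·T(s'|s,u,a)`. -/
def confKer [Fintype U] (Pu : S → U → ℝ) (pib : S → U → A → ℝ) (T : S → U → A → S → ℝ)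
    (s : S) (a : A) (s' : S) : ℝ :=
  ∑ u, Pu s u * (pib s u a / piMarg Pu pib s a) * T s u a s'

/-- Bellman value of the evaluation policy under kernel `P`, indexed by the number of
remaining steps: `Vaux P r πe k = V_{H+1-k}` (so `Vaux _ _ _ 0 = V_{H+1} = 0`). -/
def Vaux [Fintype S] [Fintype A] (P : S → A → S → ℝ) (r : S → A → ℝ) (pie : S → A → ℝ) :
    ℕ → S → ℝ
  | 0 => fun _ => 0
  | (k + 1) => fun s => ∑ a, pie s a * (r s a + ∑ s', P s a s' * Vaux P r pie k s')

/-- Bellman Q-value with `k` remaining steps *after* the current one: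
`Qaux P r πe k = Q_{H-k}`, i.e. `Q_h(s,a) = r(s,a) + Σ_{s'} P(s'|s,a) V_{h+1}(s')`. -/
def Qaux [Fintype S] [Fintype A] (P : S → A → S → ℝ) (r : S → A → ℝ) (pie : S → A → ℝ)
    (k : ℕ) (s : S) (a : A) : ℝ :=
  r s a + ∑ s', P s a s' * Vaux P r pie k s'

/-- Infinite-data FQE iterates indexed by remaining steps: `fqeAux Pb r πe k = f̂_{H+1-k}`,
so `f̂_{H+1} = 0` and `f̂_h(s,a) = r(s,a) + Σ_{s'} P^b(s'|s,a) Σ_{a'} π_e(a'|s') f̂_{h+1}(s',a')`. -/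
def fqeAux [Fintype S] [Fintype A] (Pb : S → A → S → ℝ) (r : S → A → ℝ) (pie : S → A → ℝ) :
    ℕ → S → A → ℝ
  | 0 => fun _ _ => 0
  | (k + 1) => fun s a => r s a + ∑ s', Pb s a s' * ∑ a', pie s' a' * fqeAux Pb r pie k s' a'

/-- CFQE uncertainty set `B̃_{sa}`: functions `g : S → ℝ` with
`α(s,a) ≤ π_b(a|s)·g(s') ≤ β(s,a)` for all `s'` and
`Σ_{s'} π_b(a|s)·g(s')·P^b(s'|s,a) = 1`. -/
def Bset [Fintype S] [Fintype U] [Fintype A] (Pu : S → U → ℝ) (pib : S → U → A → ℝ)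
    (T : S → U → A → S → ℝ) (α β : S → A → ℝ) (s : S) (a : A) : Set (S → ℝ) :=
  {g | (∀ s', α s a ≤ piMarg Pu pib s a * g s' ∧ piMarg Pu pib s a * g s' ≤ β s a) ∧
    ∑ s', piMarg Pu pib s a * g s' * confKer Pu pib T s a s' = 1}

/-- Infinite-data CFQE iterates indexed by remaining steps: `cfqeAux ... k = f̂_{H+1-k}`,
so `f̂_{H+1} = 0` and
`f̂_h(s,a) = inf_{g ∈ B̃_{sa}} Σ_{s'} P^b(s'|s,a)·π_b(a|s)·g(s')·(r(s,a) + Σ_{a'} π_e(a'|s') f̂_{h+1}(s',a'))`. -/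
def cfqeAux [Fintype S] [Fintype U] [Fintype A] (Pu : S → U → ℝ) (pib : S → U → A → ℝ)
    (T : S → U → A → S → ℝ) (α β : S → A → ℝ) (r : S → A → ℝ) (pie : S → A → ℝ) :
    ℕ → S → A → ℝ
  | 0 => fun _ _ => 0
  | (k + 1) => fun s a =>
      sInf ((fun g : S → ℝ =>
        ∑ s', confKer Pu pib T s a s' * (piMarg Pu pib s a * g s') *
          (r s a + ∑ a', pie s' a' * cfqeAux Pu pib T α β r pie k s' a')) ''
        Bset Pu pib T α β s a)

/-!
The true kernel `P` and the confounded kernel `P^b` satisfy `α P^b ≤ P ≤ β P^b`. Hence every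
reweighted kernel `w_g(s') = P^b(s'|s,a) π_b(a|s) g(s')` with `g ∈ B̃_{sa}` is a probability
vector dominating `(α/β) P ≥ ρ P`, where `ρ = α_min/β_max`, while the likelihood ratio `P / P^b`
is itself admissible and gives `w_g = P`. So each CFQE backup is an infimum over next-state
distributions that include `P` and put mass at least `ρ P` on the true dynamics: it never exceeds
the true backup, and it loses at most the fraction `1 - ρ` of the remaining value plus the
fraction `ρ` of the previous error. This gives the recursion `E_{k+1} = (1 - ρ)(k + 1) + ρ E_k`,
solved by `E_k = k - Σ_{i=1}^k ρ^i ≤ (1 - ρ) k²`.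
-/

section WeightedSum

variable {ι : Type*} [Fintype ι] {p f : ι → ℝ} {M : ℝ}

lemma sum_mul_le_of_mem_stdSimplex (hp : p ∈ stdSimplex ℝ ι) (hf : ∀ i, f i ≤ M) :
    ∑ i, p i * f i ≤ M :=
  calc ∑ i, p i * f i ≤ ∑ i, p i * M :=
        sum_le_sum fun i _ => mul_le_mul_of_nonneg_left (hf i) (hp.1 i)
    _ = M := by rw [← sum_mul, hp.2, one_mul]

lemma le_sum_mul_of_mem_stdSimplex (hp : p ∈ stdSimplex ℝ ι) (hf : ∀ i, M ≤ f i) :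
    M ≤ ∑ i, p i * f i :=
  calc M = ∑ i, p i * M := by rw [← sum_mul, hp.2, one_mul]
    _ ≤ ∑ i, p i * f i := sum_le_sum fun i _ => mul_le_mul_of_nonneg_left (hf i) (hp.1 i)

end WeightedSum

lemma sInf_image_sum_mul_mem_Icc {ι κ : Type*} [Fintype κ] {G : Set ι} {w : ι → κ → ℝ}
    {p c : κ → ℝ} {r ρ : ℝ} (hw : ∀ g ∈ G, ∑ x, w g x = 1)
    (hwp : ∀ g ∈ G, ∀ x, ρ * p x ≤ w g x) (hp : ∃ g ∈ G, w g = p) (hc : ∀ x, 0 ≤ c x) :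
    sInf ((fun g => ∑ x, w g x * (r + c x)) '' G) ∈
      Set.Icc (r + ρ * ∑ x, p x * c x) (r + ∑ x, p x * c x) := by
  have hsplit : ∀ g ∈ G, ∑ x, w g x * (r + c x) = r + ∑ x, w g x * c x := fun g hg => by
    simp only [mul_add, sum_add_distrib, ← sum_mul, hw g hg, one_mul]
  have hlower : ∀ g ∈ G, r + ρ * ∑ x, p x * c x ≤ ∑ x, w g x * (r + c x) := fun g hg => by
    rw [hsplit g hg, mul_sum]
    refine add_le_add_right (sum_le_sum fun x _ => ?_) r
    rw [← mul_assoc]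
    exact mul_le_mul_of_nonneg_right (hwp g hg x) (hc x)
  obtain ⟨g₀, hg₀, rfl⟩ := hp
  have hbdd : BddBelow ((fun g => ∑ x, w g x * (r + c x)) '' G) :=
    ⟨_, by rintro _ ⟨g, hg, rfl⟩; exact hlower g hg⟩
  refine ⟨le_csInf ⟨_, Set.mem_image_of_mem _ hg₀⟩ ?_, ?_⟩
  · rintro _ ⟨g, hg, rfl⟩
    exact hlower g hg
  · exact (csInf_le hbdd (Set.mem_image_of_mem _ hg₀)).trans_eq (hsplit g₀ hg₀)

section Kernels

variable [Fintype U] {Pu : S → U → ℝ} {pib : S → U → A → ℝ} {T : S → U → A → S → ℝ}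

lemma piMarg_pos (hPu : ∀ s, Pu s ∈ stdSimplex ℝ U) (hpib : ∀ s u a, 0 < pib s u a)
    (s : S) (a : A) : 0 < piMarg Pu pib s a := by
  obtain ⟨u, -, hu⟩ : ∃ u ∈ univ, (0 : ℝ) < Pu s u :=
    exists_lt_of_sum_lt (by simp [(hPu s).2])
  exact sum_pos' (fun v _ => mul_nonneg ((hPu s).1 v) (hpib s v a).le)
    ⟨u, mem_univ u, mul_pos hu (hpib s u a)⟩

variable [Fintype S]

lemma margKer_mem_stdSimplex (hPu : ∀ s, Pu s ∈ stdSimplex ℝ U)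
    (hT : ∀ s u a, T s u a ∈ stdSimplex ℝ S) (s : S) (a : A) :
    margKer Pu T s a ∈ stdSimplex ℝ S := by
  refine ⟨fun s' => sum_nonneg fun u _ => mul_nonneg ((hPu s).1 u) ((hT s u a).1 s'), ?_⟩
  simp only [margKer]
  rw [sum_comm]
  simp only [← mul_sum, (hT _ _ _).2, mul_one, (hPu s).2]

lemma confKer_mem_stdSimplex (hPu : ∀ s, Pu s ∈ stdSimplex ℝ U)
    (hT : ∀ s u a, T s u a ∈ stdSimplex ℝ S) (hpib : ∀ s u a, 0 < pib s u a) (s : S) (a : A) :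
    confKer Pu pib T s a ∈ stdSimplex ℝ S := by
  have hm := piMarg_pos hPu hpib s a
  refine ⟨fun s' => sum_nonneg fun u _ => ?_, ?_⟩
  · exact mul_nonneg (mul_nonneg ((hPu s).1 u) (div_nonneg (hpib s u a).le hm.le))
      ((hT s u a).1 s')
  simp only [confKer]
  rw [sum_comm]
  simp only [← mul_sum, (hT _ _ _).2, mul_one, mul_div_assoc', ← sum_div]
  exact div_self hm.ne'

lemma mul_confKer_le_margKer (hPu : ∀ s, Pu s ∈ stdSimplex ℝ U)
    (hT : ∀ s u a, T s u a ∈ stdSimplex ℝ S) (hpib : ∀ s u a, 0 < pib s u a)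
    {s : S} {a : A} {α : ℝ} (hα : ∀ u, α ≤ piMarg Pu pib s a / pib s u a) (s' : S) :
    α * confKer Pu pib T s a s' ≤ margKer Pu T s a s' := by
  have hm := piMarg_pos hPu hpib s a
  simp only [confKer, margKer, mul_sum]
  refine sum_le_sum fun u _ => ?_
  have hratio : α * (pib s u a / piMarg Pu pib s a) ≤ 1 := by
    rw [← mul_div_assoc, div_le_one hm, ← le_div_iff₀ (hpib s u a)]
    exact hα u
  calc α * (Pu s u * (pib s u a / piMarg Pu pib s a) * T s u a s')
      = α * (pib s u a / piMarg Pu pib s a) * (Pu s u * T s u a s') := by ring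
    _ ≤ Pu s u * T s u a s' :=
      mul_le_of_le_one_left (mul_nonneg ((hPu s).1 u) ((hT s u a).1 s')) hratio

lemma margKer_le_mul_confKer (hPu : ∀ s, Pu s ∈ stdSimplex ℝ U)
    (hT : ∀ s u a, T s u a ∈ stdSimplex ℝ S) (hpib : ∀ s u a, 0 < pib s u a)
    {s : S} {a : A} {β : ℝ} (hβ : ∀ u, piMarg Pu pib s a / pib s u a ≤ β) (s' : S) :
    margKer Pu T s a s' ≤ β * confKer Pu pib T s a s' := by
  have hm := piMarg_pos hPu hpib s a
  simp only [confKer, margKer, mul_sum]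
  refine sum_le_sum fun u _ => ?_
  have hratio : 1 ≤ β * (pib s u a / piMarg Pu pib s a) := by
    rw [← mul_div_assoc, one_le_div hm, ← div_le_iff₀ (hpib s u a)]
    exact hβ u
  calc Pu s u * T s u a s'
      ≤ β * (pib s u a / piMarg Pu pib s a) * (Pu s u * T s u a s') :=
      le_mul_of_one_le_left (mul_nonneg ((hPu s).1 u) ((hT s u a).1 s')) hratio
    _ = β * (Pu s u * (pib s u a / piMarg Pu pib s a) * T s u a s') := by ring

lemma le_one_of_forall_le_piMarg_div (hPu : ∀ s, Pu s ∈ stdSimplex ℝ U)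
    (hT : ∀ s u a, T s u a ∈ stdSimplex ℝ S) (hpib : ∀ s u a, 0 < pib s u a)
    {s : S} {a : A} {α : ℝ} (hα : ∀ u, α ≤ piMarg Pu pib s a / pib s u a) : α ≤ 1 := by
  have h := sum_le_sum fun s' (_ : s' ∈ univ) => mul_confKer_le_margKer hPu hT hpib hα s'
  rwa [← mul_sum, (confKer_mem_stdSimplex hPu hT hpib s a).2,
    (margKer_mem_stdSimplex hPu hT s a).2, mul_one] at h

lemma one_le_of_forall_piMarg_div_le (hPu : ∀ s, Pu s ∈ stdSimplex ℝ U)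
    (hT : ∀ s u a, T s u a ∈ stdSimplex ℝ S) (hpib : ∀ s u a, 0 < pib s u a)
    {s : S} {a : A} {β : ℝ} (hβ : ∀ u, piMarg Pu pib s a / pib s u a ≤ β) : 1 ≤ β := by
  have h := sum_le_sum fun s' (_ : s' ∈ univ) => margKer_le_mul_confKer hPu hT hpib hβ s'
  rwa [← mul_sum, (confKer_mem_stdSimplex hPu hT hpib s a).2,
    (margKer_mem_stdSimplex hPu hT s a).2, mul_one] at h

end Kernels

section Values

variable [Fintype S] [Fintype A] {P : S → A → S → ℝ} {r pie : S → A → ℝ}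

lemma Vaux_succ (k : ℕ) (s : S) :
    Vaux P r pie (k + 1) s = ∑ a, pie s a * Qaux P r pie k s a := rfl

lemma Vaux_succ_sub_sum_mul (f : S → A → ℝ) (k : ℕ) (s : S) :
    Vaux P r pie (k + 1) s - ∑ a, pie s a * f s a =
      ∑ a, pie s a * (Qaux P r pie k s a - f s a) := by
  simp only [Vaux_succ, mul_sub, sum_sub_distrib]

lemma Vaux_mem_Icc (hP : ∀ s a, P s a ∈ stdSimplex ℝ S) (hr0 : ∀ s a, 0 ≤ r s a)
    (hr1 : ∀ s a, r s a ≤ 1) (hpie : ∀ s, pie s ∈ stdSimplex ℝ A) (k : ℕ) (s : S) :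
    Vaux P r pie k s ∈ Set.Icc 0 (k : ℝ) := by
  induction k generalizing s with
  | zero => simp [Vaux]
  | succ k ih =>
    rw [Vaux_succ, Nat.cast_succ]
    refine ⟨le_sum_mul_of_mem_stdSimplex (hpie s) fun a => ?_,
      sum_mul_le_of_mem_stdSimplex (hpie s) fun a => ?_⟩
    · exact add_nonneg (hr0 s a) (le_sum_mul_of_mem_stdSimplex (hP s a) fun s' => (ih s').1)
    · rw [add_comm (k : ℝ)]
      exact add_le_add (hr1 s a) (sum_mul_le_of_mem_stdSimplex (hP s a) fun s' => (ih s').2)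

end Values

lemma sum_Icc_one_pow_succ {R : Type*} [CommRing R] (x : R) (k : ℕ) :
    ∑ i ∈ Icc 1 (k + 1), x ^ i = x * (1 + ∑ i ∈ Icc 1 k, x ^ i) := by
  induction k with
  | zero => simp
  | succ k ih =>
    rw [sum_Icc_succ_top (by omega : 1 ≤ k + 1 + 1), sum_Icc_succ_top (by omega : 1 ≤ k + 1)] at *
    linear_combination ih

def cfqeErrorBound (ρ : ℝ) (k : ℕ) : ℝ := k - ∑ i ∈ Icc 1 k, ρ ^ i

lemma cfqeErrorBound_zero (ρ : ℝ) : cfqeErrorBound ρ 0 = 0 := by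
  simp [cfqeErrorBound]

lemma cfqeErrorBound_succ (ρ : ℝ) (k : ℕ) :
    cfqeErrorBound ρ (k + 1) = (1 - ρ) * (k + 1 : ℕ) + ρ * cfqeErrorBound ρ k := by
  rw [cfqeErrorBound, cfqeErrorBound, sum_Icc_one_pow_succ]
  push_cast
  ring

lemma cfqeErrorBound_le {ρ : ℝ} (hρ0 : 0 ≤ ρ) (hρ1 : ρ ≤ 1) (k : ℕ) :
    cfqeErrorBound ρ k ≤ (1 - ρ) * k ^ 2 := by
  induction k with
  | zero => simp [cfqeErrorBound_zero]
  | succ k ih =>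
    have h1ρ : 0 ≤ 1 - ρ := sub_nonneg.2 hρ1
    rw [cfqeErrorBound_succ]
    push_cast
    nlinarith [mul_le_mul_of_nonneg_left ih hρ0, mul_nonneg (mul_nonneg h1ρ h1ρ) (sq_nonneg (k : ℝ)),
      mul_nonneg h1ρ (Nat.cast_nonneg k : (0 : ℝ) ≤ k)]

lemma cfqeErrorBound_one_div_one_add_le {ε : ℝ} (hε : 0 ≤ ε) (m : ℕ) :
    cfqeErrorBound (1 / (1 + ε) / (1 + ε)) m ≤ 2 * ε * ((m + 1 : ℕ) : ℝ) ^ 2 := by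
  have h1ε : 0 < (1 + ε) * (1 + ε) := by positivity
  have hρ1 : 1 / (1 + ε) / (1 + ε) ≤ 1 := by
    rw [div_div, div_le_one h1ε]
    nlinarith
  have hρε : 1 - 1 / (1 + ε) / (1 + ε) ≤ 2 * ε := by
    rw [div_div, sub_le_iff_le_add, ← sub_le_iff_le_add', le_div_iff₀ h1ε]
    nlinarith [pow_nonneg hε 3]
  calc cfqeErrorBound (1 / (1 + ε) / (1 + ε)) m ≤ (1 - 1 / (1 + ε) / (1 + ε)) * m ^ 2 :=
        cfqeErrorBound_le (by positivity) hρ1 m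
    _ ≤ 2 * ε * ((m + 1 : ℕ) : ℝ) ^ 2 := by
        push_cast
        gcongr
        linarith

def reweightedKer [Fintype U] (Pu : S → U → ℝ) (pib : S → U → A → ℝ) (T : S → U → A → S → ℝ)
    (s : S) (a : A) (g : S → ℝ) (s' : S) : ℝ :=
  confKer Pu pib T s a s' * (piMarg Pu pib s a * g s')

section CFQE

variable [Fintype S] [Fintype U] [Fintype A] {Pu : S → U → ℝ} {pib : S → U → A → ℝ}
  {T : S → U → A → S → ℝ} {α β r pie : S → A → ℝ}

lemma sum_reweightedKer_of_mem_Bset {s : S} {a : A} {g : S → ℝ}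
    (hg : g ∈ Bset Pu pib T α β s a) : ∑ s', reweightedKer Pu pib T s a g s' = 1 := by
  rw [← hg.2]
  exact sum_congr rfl fun s' _ => mul_comm _ _

lemma mul_margKer_le_reweightedKer (hPu : ∀ s, Pu s ∈ stdSimplex ℝ U)
    (hT : ∀ s u a, T s u a ∈ stdSimplex ℝ S) (hpib : ∀ s u a, 0 < pib s u a)
    (hsens : ∀ s u a, α s a ≤ piMarg Pu pib s a / pib s u a ∧
      piMarg Pu pib s a / pib s u a ≤ β s a)
    {ρ : ℝ} {s : S} {a : A} (hρ0 : 0 ≤ ρ) (hρ : ρ ≤ α s a / β s a) {g : S → ℝ}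
    (hg : g ∈ Bset Pu pib T α β s a) (s' : S) :
    ρ * margKer Pu T s a s' ≤ reweightedKer Pu pib T s a g s' := by
  have hβ : 0 < β s a :=
    one_pos.trans_le (one_le_of_forall_piMarg_div_le hPu hT hpib fun u => (hsens s u a).2)
  calc ρ * margKer Pu T s a s'
      ≤ α s a / β s a * (β s a * confKer Pu pib T s a s') :=
        mul_le_mul hρ (margKer_le_mul_confKer hPu hT hpib (fun u => (hsens s u a).2) s')
          ((margKer_mem_stdSimplex hPu hT s a).1 s') (hρ0.trans hρ)
    _ = confKer Pu pib T s a s' * α s a := by field_simp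
    _ ≤ reweightedKer Pu pib T s a g s' :=
        mul_le_mul_of_nonneg_left (hg.1 s').1 ((confKer_mem_stdSimplex hPu hT hpib s a).1 s')

lemma exists_mem_Bset_reweightedKer_eq_margKer (hPu : ∀ s, Pu s ∈ stdSimplex ℝ U)
    (hT : ∀ s u a, T s u a ∈ stdSimplex ℝ S) (hpib : ∀ s u a, 0 < pib s u a)
    (hsens : ∀ s u a, α s a ≤ piMarg Pu pib s a / pib s u a ∧
      piMarg Pu pib s a / pib s u a ≤ β s a) (s : S) (a : A) :
    ∃ g ∈ Bset Pu pib T α β s a, reweightedKer Pu pib T s a g = margKer Pu T s a := by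
  have hlo := mul_confKer_le_margKer (T := T) hPu hT hpib fun u => (hsens s u a).1
  have hhi := margKer_le_mul_confKer (T := T) hPu hT hpib fun u => (hsens s u a).2
  have hP := margKer_mem_stdSimplex hPu hT s a
  -- the likelihood ratio `P / P^b`, set to `1` where `P^b`, and hence `P`, vanishes
  let ratio : S → ℝ := fun s' =>
    if confKer Pu pib T s a s' = 0 then 1 else margKer Pu T s a s' / confKer Pu pib T s a s'
  have hratio_mem : ∀ s', α s a ≤ ratio s' ∧ ratio s' ≤ β s a := by
    intro s'
    by_cases h : confKer Pu pib T s a s' = 0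
    · simp only [ratio, h, if_true]
      exact ⟨le_one_of_forall_le_piMarg_div hPu hT hpib fun u => (hsens s u a).1,
        one_le_of_forall_piMarg_div_le hPu hT hpib fun u => (hsens s u a).2⟩
    · have hpos := ((confKer_mem_stdSimplex hPu hT hpib s a).1 s').lt_of_ne' h
      simp only [ratio, h, if_false]
      exact ⟨(le_div_iff₀ hpos).2 (hlo s'), (div_le_iff₀ hpos).2 (hhi s')⟩
  have hratio_mul : ∀ s', confKer Pu pib T s a s' * ratio s' = margKer Pu T s a s' := by
    intro s'
    by_cases h : confKer Pu pib T s a s' = 0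
    · have h0 : margKer Pu T s a s' = 0 :=
        le_antisymm (by simpa [h] using hhi s') (hP.1 s')
      rw [h, h0, zero_mul]
    · simp only [ratio, h, if_false]
      exact mul_div_cancel₀ _ h
  have hm := (piMarg_pos hPu hpib s a).ne'
  have hweight : reweightedKer Pu pib T s a (fun s' => ratio s' / piMarg Pu pib s a) =
      margKer Pu T s a :=
    funext fun s' => by simp only [reweightedKer, mul_div_cancel₀ _ hm, hratio_mul]
  refine ⟨_, ⟨fun s' => ?_, ?_⟩, hweight⟩
  · rw [mul_div_cancel₀ _ hm]
    exact hratio_mem s'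
  · rw [← hP.2, ← hweight]
    exact sum_congr rfl fun s' _ => mul_comm _ _

lemma cfqeAux_succ (k : ℕ) (s : S) (a : A) :
    cfqeAux Pu pib T α β r pie (k + 1) s a =
      sInf ((fun g => ∑ s', reweightedKer Pu pib T s a g s' *
        (r s a + ∑ a', pie s' a' * cfqeAux Pu pib T α β r pie k s' a')) ''
        Bset Pu pib T α β s a) := rfl

lemma cfqeAux_succ_bounds_of_gap (hPu : ∀ s, Pu s ∈ stdSimplex ℝ U)
    (hT : ∀ s u a, T s u a ∈ stdSimplex ℝ S) (hpib : ∀ s u a, 0 < pib s u a)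
    (hr0 : ∀ s a, 0 ≤ r s a)
    (hsens : ∀ s u a, α s a ≤ piMarg Pu pib s a / pib s u a ∧
      piMarg Pu pib s a / pib s u a ≤ β s a)
    {ρ : ℝ} (hρ0 : 0 ≤ ρ) (hρ : ∀ s a, ρ ≤ α s a / β s a) {k : ℕ} {D : ℝ}
    (hc : ∀ s', 0 ≤ ∑ a', pie s' a' * cfqeAux Pu pib T α β r pie k s' a')
    (hv : ∀ s', Vaux (margKer Pu T) r pie k s' ≤ k)
    (hgap : ∀ s', Vaux (margKer Pu T) r pie k s' -
      ∑ a', pie s' a' * cfqeAux Pu pib T α β r pie k s' a' ∈ Set.Icc 0 D) (s : S) (a : A) :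
    0 ≤ cfqeAux Pu pib T α β r pie (k + 1) s a ∧
      Qaux (margKer Pu T) r pie k s a - cfqeAux Pu pib T α β r pie (k + 1) s a ∈
        Set.Icc 0 ((1 - ρ) * k + ρ * D) := by
  set c : S → ℝ := fun s' => ∑ a', pie s' a' * cfqeAux Pu pib T α β r pie k s' a'
  set v : S → ℝ := Vaux (margKer Pu T) r pie k
  set p : S → ℝ := margKer Pu T s a
  have hp : p ∈ stdSimplex ℝ S := margKer_mem_stdSimplex hPu hT s a
  have hα1 := le_one_of_forall_le_piMarg_div (T := T) hPu hT hpib fun u => (hsens s u a).1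
  have hβ1 := one_le_of_forall_piMarg_div_le (T := T) hPu hT hpib fun u => (hsens s u a).2
  have hρ1 : ρ ≤ 1 := (hρ s a).trans (div_le_one_of_le₀ (hα1.trans hβ1) (zero_le_one.trans hβ1))
  obtain ⟨hlow, hup⟩ := sInf_image_sum_mul_mem_Icc (w := reweightedKer Pu pib T s a)
    (r := r s a) (fun g hg => sum_reweightedKer_of_mem_Bset hg)
    (fun g hg => mul_margKer_le_reweightedKer hPu hT hpib hsens hρ0 (hρ s a) hg)
    (exists_mem_Bset_reweightedKer_eq_margKer hPu hT hpib hsens s a) hc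
  rw [← cfqeAux_succ] at hlow hup
  have hQ : Qaux (margKer Pu T) r pie k s a = r s a + ∑ s', p s' * v s' := rfl
  have hpc : 0 ≤ ∑ s', p s' * c s' := le_sum_mul_of_mem_stdSimplex hp hc
  have hpv : ∑ s', p s' * v s' ≤ k := sum_mul_le_of_mem_stdSimplex hp hv
  have hgap_eq : ∑ s', p s' * (v s' - c s') = ∑ s', p s' * v s' - ∑ s', p s' * c s' := by
    simp only [mul_sub, sum_sub_distrib]
  have hgap_lo : 0 ≤ ∑ s', p s' * (v s' - c s') :=
    le_sum_mul_of_mem_stdSimplex hp fun s' => (hgap s').1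
  have hgap_hi : ∑ s', p s' * (v s' - c s') ≤ D :=
    sum_mul_le_of_mem_stdSimplex hp fun s' => (hgap s').2
  refine ⟨(add_nonneg (hr0 s a) (mul_nonneg hρ0 hpc)).trans hlow, ?_, ?_⟩
  · rw [hQ]
    linarith
  · rw [hQ]
    nlinarith [mul_le_mul_of_nonneg_left hpv (sub_nonneg.2 hρ1),
      mul_le_mul_of_nonneg_left hgap_hi hρ0]

lemma cfqeAux_bounds (hPu : ∀ s, Pu s ∈ stdSimplex ℝ U)
    (hT : ∀ s u a, T s u a ∈ stdSimplex ℝ S) (hpib : ∀ s u a, 0 < pib s u a)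
    (hr0 : ∀ s a, 0 ≤ r s a) (hr1 : ∀ s a, r s a ≤ 1) (hpie : ∀ s, pie s ∈ stdSimplex ℝ A)
    (hsens : ∀ s u a, α s a ≤ piMarg Pu pib s a / pib s u a ∧
      piMarg Pu pib s a / pib s u a ≤ β s a)
    {ρ : ℝ} (hρ0 : 0 ≤ ρ) (hρ : ∀ s a, ρ ≤ α s a / β s a) (k : ℕ) (s : S) (a : A) :
    0 ≤ cfqeAux Pu pib T α β r pie (k + 1) s a ∧
      Qaux (margKer Pu T) r pie k s a - cfqeAux Pu pib T α β r pie (k + 1) s a ∈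
        Set.Icc 0 (cfqeErrorBound ρ k) := by
  have hV := Vaux_mem_Icc (margKer_mem_stdSimplex hPu hT) hr0 hr1 hpie
  induction k generalizing s a with
  | zero =>
    simpa [cfqeErrorBound_zero] using cfqeAux_succ_bounds_of_gap hPu hT hpib hr0 hsens hρ0 hρ
      (k := 0) (D := 0) (fun s' => by simp [cfqeAux]) (fun s' => (hV 0 s').2)
      (fun s' => by simp [Vaux, cfqeAux]) s a
  | succ k ih =>
    rw [cfqeErrorBound_succ]
    refine cfqeAux_succ_bounds_of_gap hPu hT hpib hr0 hsens hρ0 hρ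
      (fun s' => le_sum_mul_of_mem_stdSimplex (hpie s') fun a' => (ih s' a').1)
      (fun s' => (hV _ s').2) (fun s' => ?_) s a
    rw [Vaux_succ_sub_sum_mul]
    exact ⟨le_sum_mul_of_mem_stdSimplex (hpie s') fun a' => (ih s' a').2.1,
      sum_mul_le_of_mem_stdSimplex (hpie s') fun a' => (ih s' a').2.2⟩

end CFQE

theorem cfqe_error_bounds_general
    [Fintype S] [Fintype U] [Fintype A]
    (H : ℕ) (hH : 1 ≤ H)
    (Pu : S → U → ℝ) (hPu0 : ∀ s u, 0 ≤ Pu s u) (hPu1 : ∀ s, ∑ u, Pu s u = 1)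
    (T : S → U → A → S → ℝ) (hT0 : ∀ s u a s', 0 ≤ T s u a s')
    (hT1 : ∀ s u a, ∑ s', T s u a s' = 1)
    (r : S → A → ℝ) (hr0 : ∀ s a, 0 ≤ r s a) (hr1 : ∀ s a, r s a ≤ 1)
    (pib : S → U → A → ℝ) (hpib0 : ∀ s u a, 0 < pib s u a)
    (pie : S → A → ℝ) (hpie0 : ∀ s a, 0 ≤ pie s a) (hpie1 : ∀ s, ∑ a, pie s a = 1)
    (α β : S → A → ℝ)
    (hsens : ∀ s u a, α s a ≤ piMarg Pu pib s a / pib s u a ∧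
      piMarg Pu pib s a / pib s u a ≤ β s a)
    (αmin βmax : ℝ) (hαmin0 : 0 < αmin)
    (hαmin : ∀ s a, αmin ≤ α s a) (hβmax : ∀ s a, β s a ≤ βmax) :
    (∀ h : ℕ, 1 ≤ h → h ≤ H → ∀ s a,
      0 ≤ Qaux (margKer Pu T) r pie (H - h) s a -
            cfqeAux Pu pib T α β r pie (H + 1 - h) s a ∧
        Qaux (margKer Pu T) r pie (H - h) s a -
            cfqeAux Pu pib T α β r pie (H + 1 - h) s a ≤
          ((H - h : ℕ) : ℝ) - ∑ i ∈ Icc 1 (H - h), (αmin / βmax) ^ i) ∧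
    (∀ ε : ℝ, 0 < ε → (∀ s a, α s a = 1 / (1 + ε)) → (∀ s a, β s a = 1 + ε) →
      ∀ s : S,
        0 ≤ Vaux (margKer Pu T) r pie H s -
              ∑ a, pie s a * cfqeAux Pu pib T α β r pie H s a ∧
          Vaux (margKer Pu T) r pie H s -
              ∑ a, pie s a * cfqeAux Pu pib T α β r pie H s a ≤
            2 * ε * H ^ 2) := by
  have hPu s : Pu s ∈ stdSimplex ℝ U := ⟨hPu0 s, hPu1 s⟩
  have hT s u a : T s u a ∈ stdSimplex ℝ S := ⟨hT0 s u a, hT1 s u a⟩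
  have hpie s : pie s ∈ stdSimplex ℝ A := ⟨hpie0 s, hpie1 s⟩
  refine ⟨fun h _ hhH s a => ?_, fun ε hε hα hβ s => ?_⟩
  · have hβ_pos s a : 0 < β s a :=
      one_pos.trans_le (one_le_of_forall_piMarg_div_le hPu hT hpib0 fun u => (hsens s u a).2)
    have hβmax_pos : 0 < βmax := (hβ_pos s a).trans_le (hβmax s a)
    have hρ s a : αmin / βmax ≤ α s a / β s a :=
      div_le_div₀ (hαmin0.le.trans (hαmin s a)) (hαmin s a) (hβ_pos s a) (hβmax s a)
    rw [show H + 1 - h = H - h + 1 by omega]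
    exact (cfqeAux_bounds hPu hT hpib0 hr0 hr1 hpie hsens (div_pos hαmin0 hβmax_pos).le hρ
      (H - h) s a).2
  · obtain ⟨m, rfl⟩ : ∃ m, H = m + 1 := ⟨H - 1, by omega⟩
    have hρ s a : 1 / (1 + ε) / (1 + ε) ≤ α s a / β s a := by rw [hα, hβ]
    have hbounds := cfqeAux_bounds hPu hT hpib0 hr0 hr1 hpie hsens (by positivity) hρ m
    rw [Vaux_succ_sub_sum_mul]
    exact ⟨le_sum_mul_of_mem_stdSimplex (hpie s) fun a => (hbounds s a).2.1,
      (sum_mul_le_of_mem_stdSimplex (hpie s) fun a => (hbounds s a).2.2).trans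
        (cfqeErrorBound_one_div_one_add_le hε.le m)⟩

/-- The infinite-data CFQE iterates are valid lower bounds on the true Q-function with
worst-case error `(H−h) − Σ_{i=1}^{H−h} (α_min/β_max)^i`; in particular for
`α = 1/(1+ε)`, `β = 1+ε` one gets `0 ≤ V_1(s) − Σ_a π_e(a|s) f̂_1(s,a) ≤ 2εH²`. -/
theorem cfqe_error_bounds
    [Fintype S] [Fintype U] [Fintype A] [Nonempty S] [Nonempty U] [Nonempty A]
    (H : ℕ) (hH : 1 ≤ H)
    (Pu : S → U → ℝ) (hPu0 : ∀ s u, 0 ≤ Pu s u) (hPu1 : ∀ s, ∑ u, Pu s u = 1)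
    (T : S → U → A → S → ℝ) (hT0 : ∀ s u a s', 0 ≤ T s u a s')
    (hT1 : ∀ s u a, ∑ s', T s u a s' = 1)
    (r : S → A → ℝ) (hr0 : ∀ s a, 0 ≤ r s a) (hr1 : ∀ s a, r s a ≤ 1)
    (pib : S → U → A → ℝ) (hpib0 : ∀ s u a, 0 < pib s u a)
    (hpib1 : ∀ s u, ∑ a, pib s u a = 1)
    (pie : S → A → ℝ) (hpie0 : ∀ s a, 0 ≤ pie s a) (hpie1 : ∀ s, ∑ a, pie s a = 1)
    (α β : S → A → ℝ) (hαpos : ∀ s a, 0 < α s a)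
    (hsens : ∀ s u a, α s a ≤ piMarg Pu pib s a / pib s u a ∧
      piMarg Pu pib s a / pib s u a ≤ β s a)
    (αmin βmax : ℝ) (hαmin0 : 0 < αmin)
    (hαmin : ∀ s a, αmin ≤ α s a) (hβmax : ∀ s a, β s a ≤ βmax) :
    (∀ h : ℕ, 1 ≤ h → h ≤ H → ∀ s a,
      0 ≤ Qaux (margKer Pu T) r pie (H - h) s a -
            cfqeAux Pu pib T α β r pie (H + 1 - h) s a ∧
        Qaux (margKer Pu T) r pie (H - h) s a -
            cfqeAux Pu pib T α β r pie (H + 1 - h) s a ≤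
          ((H - h : ℕ) : ℝ) - ∑ i ∈ Icc 1 (H - h), (αmin / βmax) ^ i) ∧
    (∀ ε : ℝ, 0 < ε → (∀ s a, α s a = 1 / (1 + ε)) → (∀ s a, β s a = 1 + ε) →
      ∀ s : S,
        0 ≤ Vaux (margKer Pu T) r pie H s -
              ∑ a, pie s a * cfqeAux Pu pib T α β r pie H s a ∧
          Vaux (margKer Pu T) r pie H s -
              ∑ a, pie s a * cfqeAux Pu pib T α β r pie H s a ≤
            2 * ε * H ^ 2) :=
  cfqe_error_bounds_general H hH Pu hPu0 hPu1 T hT0 hT1 r hr0 hr1 pib hpib0 pie hpie0 hpie1 α β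
    hsens αmin βmax hαmin0 hαmin hβmax
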